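/- Let n ≥ 3. The number of elements of P_n, i.e. the number of subsets S ⊆ [n] that arise as the circular peak set of some permutation of [n], equals the central binomial coefficient C(n−1, ⌊(n−1)/2⌋). -/

import Mathlib

/-!
A set `S ⊆ [n]` is a peak set exactly when every `s ∈ S` exceeds twice the number of elements
of `S` that are `≤ s`. Necessity: the peaks of value `≤ s`, their right neighbours and the left
neighbour of the leftmost of them are `2 #{x ∈ S | x ≤ s} + 1` distinct positions carrying
distinct values in `[1, s]`. Sufficiency: with `s₀ < s₁ < ⋯` the elements of `S` and
`t₀ < t₁ < ⋯` those of `[n] \ S`, the word `t₀ s₀ t₁ s₁ ⋯ t_{k-1} s_{k-1} t_k t_{k+1} ⋯` has peak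
set `S`, the condition being exactly what makes `t_{i+1} < s_i`.
Splitting according to whether `n ∈ S`, the number of such sets with at most `j` elements
satisfies Pascal's recursion, so it is `C(n - 1, j)` whenever `2 j < n`; the boundary case
`n = 2 j + 2` closes by the symmetry `C(2j+1, j+1) = C(2j+1, j)`.
-/

open Finset Polynomial

/-- `σ` is a permutation of `[n] = {1, …, n}` (viewed as a function `ℕ → ℕ`
restricted to a bijection of `{1, …, n}` onto itself). -/
def IsPermOn (n : ℕ) (σ : ℕ → ℕ) : Prop :=
  Set.BijOn σ (Set.Icc 1 n) (Set.Icc 1 n)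

/-- The circular peak set of `σ` (as a permutation of `[n]`):
`CP(σ) = {σ(i) : 2 ≤ i ≤ n−1, σ(i−1) < σ(i) > σ(i+1)}`. -/
def CP (n : ℕ) (σ : ℕ → ℕ) : Finset ℕ :=
  ((Finset.Icc 2 (n - 1)).filter (fun i => σ (i - 1) < σ i ∧ σ (i + 1) < σ i)).image σ

open scoped Classical in
/-- `Pn n` is the collection of all subsets `S ⊆ [n]` arising as the circular peak
set of some permutation of `[n]`. -/
noncomputable def Pn (n : ℕ) : Finset (Finset ℕ) :=
  (Finset.Icc 1 n).powerset.filter (fun S => ∃ σ : ℕ → ℕ, IsPermOn n σ ∧ CP n σ = S)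

/-- `pcount n k` is the number of members of `Pn n` of cardinality `k`;
in the paper's notation, `p_{n,i} = pcount n (i+1)`. -/
noncomputable def pcount (n k : ℕ) : ℕ :=
  ((Pn n).filter (fun S => S.card = k)).card

/-- The f-polynomial `P_n(x) = Σ_{i=0}^{⌊(n−1)/2⌋} p_{n,i−1} x^{⌊(n−1)/2⌋−i}`. -/
noncomputable def fpoly (n : ℕ) : Polynomial ℚ :=
  ∑ i ∈ Finset.range ((n - 1) / 2 + 1),
    Polynomial.C (pcount n i : ℚ) * Polynomial.X ^ ((n - 1) / 2 - i)

def PeakAdmissible (S : Finset ℕ) : Prop :=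
  ∀ s ∈ S, 2 * #{x ∈ S | x ≤ s} < s

instance : DecidablePred PeakAdmissible := fun S => by
  unfold PeakAdmissible; infer_instance

theorem PeakAdmissible.two_mul_card_lt {n : ℕ} {S : Finset ℕ} (hS : PeakAdmissible S)
    (hsub : S ⊆ Icc 1 n) (hne : S.Nonempty) : 2 * #S < n := by
  have hmax := hS _ (S.max'_mem hne)
  rw [filter_true_of_mem fun x hx => S.le_max' x hx] at hmax
  have := mem_Icc.mp (hsub (S.max'_mem hne))
  omega

theorem peakAdmissible_insert_iff {n : ℕ} {S : Finset ℕ} (hsub : S ⊆ Icc 1 n) :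
    PeakAdmissible (insert (n + 1) S) ↔ PeakAdmissible S ∧ 2 * #S + 1 < n := by
  have hlt : ∀ x ∈ S, x < n + 1 := fun x hx => by have := mem_Icc.mp (hsub hx); omega
  have hnS : n + 1 ∉ S := fun h => (hlt _ h).false
  have hbelow : ∀ s ∈ S, {x ∈ insert (n + 1) S | x ≤ s} = {x ∈ S | x ≤ s} := fun s hs => by
    rw [filter_insert, if_neg (by have := hlt s hs; omega)]
  have htop : {x ∈ insert (n + 1) S | x ≤ n + 1} = insert (n + 1) S :=
    filter_true_of_mem fun x hx => by
      rcases mem_insert.mp hx with rfl | hx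
      exacts [le_rfl, (hlt x hx).le]
  unfold PeakAdmissible
  simp only [forall_mem_insert, htop, card_insert_of_notMem hnS]
  constructor
  · rintro ⟨hmax, hS⟩
    exact ⟨fun s hs => hbelow s hs ▸ hS s hs, by omega⟩
  · rintro ⟨hS, hcard⟩
    exact ⟨by omega, fun s hs => (hbelow s hs).symm ▸ hS s hs⟩

theorem card_filter_powerset_insert {α : Type*} [DecidableEq α] {s : Finset α} {a : α}
    (ha : a ∉ s) (P : Finset α → Prop) [DecidablePred P] :
    #{t ∈ (insert a s).powerset | P t} =
      #{t ∈ s.powerset | P t} + #{t ∈ s.powerset | P (insert a t)} := by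
  simp only [card_filter, sum_powerset_insert ha]

noncomputable def admissibleCount (n j : ℕ) : ℕ :=
  #{S ∈ (Icc 1 n).powerset | PeakAdmissible S ∧ #S ≤ j}

theorem admissibleCount_zero_right (n : ℕ) : admissibleCount n 0 = 1 := by
  rw [admissibleCount, card_eq_one]
  refine ⟨∅, eq_singleton_iff_unique_mem.mpr ⟨?_, fun S hS => ?_⟩⟩
  · simp [PeakAdmissible]
  · simpa using (mem_filter.mp hS).2.2

theorem admissibleCount_succ_succ {n j : ℕ} (h : 2 * j + 2 ≤ n) :
    admissibleCount (n + 1) (j + 1) = admissibleCount n (j + 1) + admissibleCount n j := by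
  have hnot : n + 1 ∉ Icc 1 n := by simp
  rw [admissibleCount, ← insert_Icc_right_eq_Icc_add_one (by omega),
    card_filter_powerset_insert hnot]
  congr 2
  refine filter_congr fun S hS => ?_
  rw [peakAdmissible_insert_iff (mem_powerset.mp hS), card_insert_of_notMem
    fun h => hnot (mem_powerset.mp hS h)]
  exact ⟨fun h' => ⟨h'.1.1, by omega⟩, fun h' => ⟨⟨h'.1, by omega⟩, by omega⟩⟩

theorem admissibleCount_succ_of_le {n j : ℕ} (h : n ≤ 2 * j + 2) :
    admissibleCount n (j + 1) = admissibleCount n j := by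
  refine congrArg card (filter_congr fun S hS => and_congr_right fun hadm => ?_)
  rcases S.eq_empty_or_nonempty with rfl | hne
  · simp
  · have := hadm.two_mul_card_lt (mem_powerset.mp hS) hne
    omega

theorem admissibleCount_eq_choose :
    ∀ {n j : ℕ}, 2 * j < n → admissibleCount n j = (n - 1).choose j
  | _, 0, _ => by rw [admissibleCount_zero_right, Nat.choose_zero_right]
  | m + 1, j + 1, h => by
    rw [admissibleCount_succ_succ (by omega), Nat.add_sub_cancel]
    rcases (show 2 * j + 3 ≤ m ∨ m = 2 * j + 2 by omega) with hm | rfl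
    · rw [admissibleCount_eq_choose (by omega), admissibleCount_eq_choose (by omega)]
      obtain ⟨l, rfl⟩ : ∃ l, m = l + 1 := ⟨m - 1, by omega⟩
      rw [Nat.choose_succ_succ', Nat.add_sub_cancel, add_comm]
    · rw [admissibleCount_succ_of_le le_rfl, admissibleCount_eq_choose (by omega),
        Nat.choose_succ_succ', Nat.choose_symm_half]
      rfl

def peakPositions (n : ℕ) (σ : ℕ → ℕ) : Finset ℕ :=
  {i ∈ Icc 2 (n - 1) | σ (i - 1) < σ i ∧ σ (i + 1) < σ i}

theorem CP_eq_image_peakPositions (n : ℕ) (σ : ℕ → ℕ) : CP n σ = (peakPositions n σ).image σ :=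
  rfl

theorem card_insert_pred_min'_union_image_succ {Q : Finset ℕ} (hQ : Q.Nonempty)
    (hsep : ∀ a ∈ Q, a + 1 ∉ Q) (h0 : 0 ∉ Q) :
    #(insert (Q.min' hQ - 1) (Q ∪ Q.image (· + 1))) = 2 * #Q + 1 := by
  have hmin : 0 < Q.min' hQ := Nat.pos_of_ne_zero fun h => h0 (h ▸ Q.min'_mem hQ)
  have hdisj : Disjoint Q (Q.image (· + 1)) := by
    simp only [disjoint_left, mem_image, not_exists, not_and]
    rintro a ha b hb rfl
    exact hsep b hb ha
  have hnew : Q.min' hQ - 1 ∉ Q ∪ Q.image (· + 1) := by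
    simp only [mem_union, mem_image, not_or, not_exists, not_and]
    refine ⟨fun h => ?_, fun b hb hb' => ?_⟩
    · have := Q.min'_le _ h; omega
    · have := Q.min'_le _ hb; omega
  rw [card_insert_of_notMem hnew, card_union_of_disjoint hdisj,
    card_image_of_injective _ (add_left_injective 1)]
  ring

theorem peakAdmissible_CP {n : ℕ} {σ : ℕ → ℕ} (hσ : IsPermOn n σ) : PeakAdmissible (CP n σ) := by
  intro s hs
  set Q := {i ∈ peakPositions n σ | σ i ≤ s}
  have hQ : ∀ i ∈ Q, (2 ≤ i ∧ i ≤ n - 1) ∧ (σ (i - 1) < σ i ∧ σ (i + 1) < σ i) ∧ σ i ≤ s :=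
    fun i hi => by simpa only [Q, peakPositions, mem_filter, mem_Icc, and_assoc] using hi
  have hQne : Q.Nonempty := by
    obtain ⟨i, hi, rfl⟩ := mem_image.mp hs
    exact ⟨i, mem_filter.mpr ⟨hi, le_rfl⟩⟩
  have hQsub : ∀ i ∈ Q, i ∈ Set.Icc 1 n := fun i hi => by
    have := hQ i hi; exact ⟨by omega, by omega⟩
  have hcard : #{x ∈ CP n σ | x ≤ s} = #Q := by
    rw [CP_eq_image_peakPositions, filter_image, card_image_of_injOn (hσ.injOn.mono hQsub)]
  set R := insert (Q.min' hQne - 1) (Q ∪ Q.image (· + 1))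
  have hR : #R = 2 * #Q + 1 := by
    refine card_insert_pred_min'_union_image_succ hQne (fun a ha ha' => ?_) fun h0 => ?_
    · have hdown := (hQ a ha).2.1.2
      have hup := (hQ _ ha').2.1.1
      rw [Nat.add_sub_cancel] at hup
      omega
    · have := hQ 0 h0; omega
  have hRpos : ∀ p ∈ R, p ∈ Set.Icc 1 n ∧ σ p ≤ s := by
    intro p hp
    simp only [R, mem_insert, mem_union, mem_image] at hp
    rcases hp with rfl | hp | ⟨i, hi, rfl⟩
    · have := hQ _ (Q.min'_mem hQne); exact ⟨⟨by omega, by omega⟩, by omega⟩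
    · have := hQ p hp; exact ⟨⟨by omega, by omega⟩, by omega⟩
    · have := hQ i hi; exact ⟨⟨by omega, by omega⟩, by omega⟩
  have hRs : #R ≤ #(Icc 1 s) := by
    refine card_le_card_of_injOn σ (fun p hp => ?_) (hσ.injOn.mono fun p hp => (hRpos p hp).1)
    exact mem_Icc.mpr ⟨(hσ.mapsTo (hRpos p hp).1).1, (hRpos p hp).2⟩
  rw [Nat.card_Icc] at hRs
  omega

section Enumeration

variable (S : Finset ℕ)

theorem Finset.image_nth_Iio_card : Nat.nth (· ∈ S) '' Set.Iio #S = S := by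
  simpa using Nat.image_nth_Iio_card (p := (· ∈ S)) S.finite_toSet

theorem Finset.strictMonoOn_nth : StrictMonoOn (Nat.nth (· ∈ S)) (Set.Iio #S) := by
  simpa using Nat.nth_strictMonoOn (p := (· ∈ S)) S.finite_toSet

variable {S}

theorem Finset.nth_mem {i : ℕ} (hi : i < #S) : Nat.nth (· ∈ S) i ∈ S :=
  S.image_nth_Iio_card.subset ⟨i, hi, rfl⟩

theorem Finset.count_nth {i : ℕ} (hi : i < #S) : Nat.count (· ∈ S) (Nat.nth (· ∈ S) i) = i :=
  Nat.count_nth_of_lt_card_finite S.finite_toSet (by simpa using hi)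

end Enumeration

theorem card_filter_le_eq_count (S : Finset ℕ) (v : ℕ) :
    #{x ∈ S | x ≤ v} = Nat.count (· ∈ S) (v + 1) := by
  rw [Nat.count_eq_card_filter_range]
  congr 1
  ext x
  simp [and_comm]

theorem count_mem_sdiff_add_count_mem {n : ℕ} {S : Finset ℕ} (hsub : S ⊆ Icc 1 n) :
    ∀ {v : ℕ}, v ≤ n + 1 → Nat.count (· ∈ Icc 1 n \ S) v + Nat.count (· ∈ S) v = v - 1
  | 0, _ => by simp
  | v + 1, hv => by
    have ih := count_mem_sdiff_add_count_mem hsub (v := v) (by omega)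
    rw [Nat.count_succ, Nat.count_succ, add_add_add_comm, ih]
    by_cases hvS : v ∈ S
    · have := (mem_Icc.mp (hsub hvS)).1
      simp only [hvS, mem_sdiff, not_true_eq_false, and_false, if_false, if_true]
      omega
    · simp only [hvS, mem_sdiff, mem_Icc, not_false_eq_true, and_true, if_false]
      split_ifs <;> omega

theorem PeakAdmissible.nth_sdiff_succ_lt_nth {n i : ℕ} {S : Finset ℕ} (hS : PeakAdmissible S)
    (hsub : S ⊆ Icc 1 n) (hi : i < #S) :
    Nat.nth (· ∈ Icc 1 n \ S) (i + 1) < Nat.nth (· ∈ S) i := by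
  set v := Nat.nth (· ∈ S) i
  have hvS : v ∈ S := Finset.nth_mem hi
  have hv : 1 ≤ v ∧ v ≤ n := mem_Icc.mp (hsub hvS)
  have hadm := hS v hvS
  rw [card_filter_le_eq_count, Nat.count_succ, if_pos hvS, Finset.count_nth hi] at hadm
  have hsplit := count_mem_sdiff_add_count_mem hsub (v := v) (by omega)
  rw [Finset.count_nth hi] at hsplit
  exact Nat.nth_lt_of_lt_count (by omega)

/-- The word `t 0, s 0, t 1, s 1, …, t (k-1), s (k-1), t k, t (k+1), …` read from position `1`. -/
def interleave (k : ℕ) (s t : ℕ → ℕ) (p : ℕ) : ℕ :=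
  if p % 2 = 0 ∧ 0 < p ∧ p ≤ 2 * k then s (p / 2 - 1) else t (p - 1 - min (p / 2) k)

section Interleave

variable {k n : ℕ} {s t : ℕ → ℕ}

theorem interleave_two_mul_add_two {i : ℕ} (hi : i < k) : interleave k s t (2 * i + 2) = s i := by
  rw [interleave, if_pos (by omega)]
  congr 1
  omega

theorem interleave_two_mul_add_one {i : ℕ} (hi : i ≤ k) : interleave k s t (2 * i + 1) = t i := by
  rw [interleave, if_neg (by omega)]
  congr 1
  omega

theorem interleave_add_add_one {j : ℕ} (hj : k ≤ j) : interleave k s t (j + k + 1) = t j := by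
  rw [interleave, if_neg (by omega)]
  congr 1
  omega

theorem interleave_position_cases {p : ℕ} (hp : 0 < p) (k : ℕ) :
    (∃ i < k, p = 2 * i + 2) ∨ (∃ i ≤ k, p = 2 * i + 1) ∨ ∃ j, k ≤ j ∧ p = j + k + 1 := by
  obtain ⟨i, rfl | rfl⟩ := Nat.even_or_odd' p <;> rcases le_or_gt i k with hik | hik
  · exact .inl ⟨i - 1, by omega, by omega⟩
  · exact .inr <| .inr ⟨2 * i - k - 1, by omega, by omega⟩
  · exact .inr <| .inl ⟨i, hik, rfl⟩
  · exact .inr <| .inr ⟨2 * i - k, by omega, by omega⟩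

theorem isPermOn_interleave (hkn : 2 * k < n) (hs : Set.MapsTo s (Set.Iio k) (Set.Icc 1 n))
    (ht : Set.MapsTo t (Set.Iio (n - k)) (Set.Icc 1 n))
    (hsurj : Set.Icc 1 n ⊆ s '' Set.Iio k ∪ t '' Set.Iio (n - k)) :
    IsPermOn n (interleave k s t) := by
  have hmaps : Set.MapsTo (interleave k s t) (Set.Icc 1 n) (Set.Icc 1 n) := by
    rintro p ⟨hp1, hpn⟩
    rcases interleave_position_cases hp1 k with ⟨i, hi, rfl⟩ | ⟨i, hi, rfl⟩ | ⟨j, hj, rfl⟩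
    · rw [interleave_two_mul_add_two hi]
      exact hs hi
    · rw [interleave_two_mul_add_one hi]
      exact ht (show i < n - k by omega)
    · rw [interleave_add_add_one hj]
      exact ht (show j < n - k by omega)
  refine ((Set.finite_Icc 1 n).surjOn_iff_bijOn_of_mapsTo hmaps).mp fun v hv => ?_
  rcases hsurj hv with ⟨i, hi, rfl⟩ | ⟨j, hj, rfl⟩
  · exact ⟨2 * i + 2, ⟨by omega, by simp only [Set.mem_Iio] at hi; omega⟩,
      interleave_two_mul_add_two hi⟩
  · simp only [Set.mem_Iio] at hj
    rcases le_or_gt j k with hjk | hjk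
    · exact ⟨2 * j + 1, ⟨by omega, by omega⟩, interleave_two_mul_add_one hjk⟩
    · exact ⟨j + k + 1, ⟨by omega, by omega⟩, interleave_add_add_one hjk.le⟩

theorem CP_interleave (hkn : 2 * k < n) (ht : StrictMonoOn t (Set.Iio (n - k)))
    (hst : ∀ i < k, t (i + 1) < s i) : CP n (interleave k s t) = (range k).image s := by
  have ht_succ : ∀ j, j + 1 < n - k → t j < t (j + 1) := fun j hj =>
    ht (show j < n - k by omega) hj (lt_add_one j)
  ext v
  simp only [CP_eq_image_peakPositions, peakPositions, mem_image, mem_filter, mem_Icc, mem_range]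
  constructor
  · rintro ⟨p, ⟨⟨hp2, hpn⟩, hleft, hright⟩, rfl⟩
    rcases interleave_position_cases (show 0 < p by omega) k with
      ⟨i, hi, rfl⟩ | ⟨i, hi, rfl⟩ | ⟨j, hj, rfl⟩
    · exact ⟨i, hi, (interleave_two_mul_add_two hi).symm⟩
    · obtain ⟨i, rfl⟩ : ∃ i', i = i' + 1 := ⟨i - 1, by omega⟩
      rw [show 2 * (i + 1) + 1 - 1 = 2 * i + 2 by omega, interleave_two_mul_add_two (by omega),
        interleave_two_mul_add_one hi] at hleft
      exact absurd hleft (hst i (by omega)).not_gt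
    · rw [show j + k + 1 + 1 = j + 1 + k + 1 by ring, interleave_add_add_one (by omega),
        interleave_add_add_one hj] at hright
      exact absurd hright (ht_succ j (by omega)).not_gt
  · rintro ⟨i, hi, rfl⟩
    refine ⟨2 * i + 2, ⟨⟨by omega, by omega⟩, ?_, ?_⟩, interleave_two_mul_add_two hi⟩
    · rw [show 2 * i + 2 - 1 = 2 * i + 1 by omega, interleave_two_mul_add_one hi.le,
        interleave_two_mul_add_two hi]
      exact (ht_succ i (by omega)).trans (hst i hi)
    · rw [show 2 * i + 2 + 1 = 2 * (i + 1) + 1 by ring, interleave_two_mul_add_one hi,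
        interleave_two_mul_add_two hi]
      exact hst i hi

end Interleave

theorem PeakAdmissible.exists_CP_eq {n : ℕ} {S : Finset ℕ} (hS : PeakAdmissible S)
    (hsub : S ⊆ Icc 1 n) (hn : 0 < n) : ∃ σ, IsPermOn n σ ∧ CP n σ = S := by
  set T := Icc 1 n \ S
  have hkn : 2 * #S < n := by
    rcases S.eq_empty_or_nonempty with rfl | hne
    · simpa using hn
    · exact hS.two_mul_card_lt hsub hne
  have hT : #T = n - #S := by rw [card_sdiff_of_subset hsub, Nat.card_Icc, Nat.add_sub_cancel]
  refine ⟨interleave #S (Nat.nth (· ∈ S)) (Nat.nth (· ∈ T)), isPermOn_interleave hkn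
    (fun i hi => mem_Icc.mp (hsub (Finset.nth_mem hi)))
    (fun j hj => mem_Icc.mp (mem_sdiff.mp (Finset.nth_mem (hT ▸ hj))).1) fun v hv => ?_, ?_⟩
  · by_cases hvS : v ∈ S
    · exact .inl (S.image_nth_Iio_card.symm ▸ hvS)
    · have hvT : v ∈ (T : Set ℕ) := mem_sdiff.mpr ⟨mem_Icc.mpr hv, hvS⟩
      exact .inr (hT ▸ T.image_nth_Iio_card.symm ▸ hvT)
  · rw [CP_interleave hkn (hT ▸ T.strictMonoOn_nth) fun i hi => hS.nth_sdiff_succ_lt_nth hsub hi]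
    exact coe_injective (by rw [coe_image, coe_range, S.image_nth_Iio_card])

theorem mem_Pn_iff {n : ℕ} (hn : 0 < n) {S : Finset ℕ} :
    S ∈ Pn n ↔ S ⊆ Icc 1 n ∧ PeakAdmissible S := by
  classical
  rw [Pn, mem_filter, mem_powerset]
  refine and_congr_right fun hsub => ⟨?_, fun hS => hS.exists_CP_eq hsub hn⟩
  rintro ⟨σ, hσ, rfl⟩
  exact peakAdmissible_CP hσ

/-- Lemma 3.1: `|P_n| = C(n−1, ⌊(n−1)/2⌋)`. -/
theorem Pn_card (n : ℕ) (hn : 3 ≤ n) :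
    (Pn n).card = Nat.choose (n - 1) ((n - 1) / 2) := by
  have hPn : Pn n = {S ∈ (Icc 1 n).powerset | PeakAdmissible S ∧ #S ≤ (n - 1) / 2} := by
    ext S
    rw [mem_Pn_iff (by omega), mem_filter, mem_powerset]
    refine and_congr_right fun hsub => ⟨fun hS => ⟨hS, ?_⟩, And.left⟩
    rcases S.eq_empty_or_nonempty with rfl | hne
    · simp
    · have := hS.two_mul_card_lt hsub hne
      omega
  rw [hPn]
  exact admissibleCount_eq_choose (by omega)
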